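/- Let s, t be irrational real numbers and let Δₙ := min{|φ_α(0) − φ_β(0)| : α, β ∈ {1,...,6}ⁿ, α ≠ β} for the IFS Φ_{s,t} (all contraction ratios being equal to 2^{−n} for words of length n). Then for every n ≥ 1, Δₙ ≤ min over (p,q) ∈ ℤ², 0 ≤ p,q ≤ 2ⁿ−1, (p,q) ≠ (0,0), of (1/2ⁿ)|q·s − p|, and likewise Δₙ ≤ min over such (p,q) of (1/2ⁿ)|q·t − p|. -/

import Mathlib

/-!
For `q < 2ⁿ`, spell `q` in binary as a word of length `n`, using the map with translation `s`
for the digit one and the map with translation `0` for the digit zero: it sends `0` to `q s / 2ⁿ`.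
Spelling `p` the same way with translation `1` gives `p / 2ⁿ`. By irrationality of `s` these two
points differ unless `p = q = 0`, so the words differ and `Δₙ ≤ |q s - p| / 2ⁿ`; likewise for `t`.
-/

open scoped BigOperators

noncomputable def phiST (s t : ℝ) (i : Fin 6) (x : ℝ) : ℝ :=
  (x + ![0, 1, s, 1 + s, t, 1 + t] i) / 2

noncomputable def compST (s t : ℝ) (l : List (Fin 6)) : ℝ → ℝ :=
  l.foldr (fun i g => phiST s t i ∘ g) id

noncomputable def DeltaST (s t : ℝ) (n : ℕ) : ℝ :=
  sInf {r : ℝ | ∃ a b : List (Fin 6), a.length = n ∧ b.length = n ∧ a ≠ b ∧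
    r = |compST s t a 0 - compST s t b 0|}

lemma Irrational.natCast_mul_ne_natCast {x : ℝ} (hx : Irrational x) {p q : ℕ}
    (hpq : ¬(p = 0 ∧ q = 0)) : (q : ℝ) * x ≠ p := by
  rcases eq_or_ne q 0 with rfl | hq
  · simpa [eq_comm] using hpq
  · exact (hx.natCast_mul hq).ne_nat p

lemma compST_cons (s t : ℝ) (i : Fin 6) (l : List (Fin 6)) (x : ℝ) :
    compST s t (i :: l) x = (compST s t l x + ![0, 1, s, 1 + s, t, 1 + t] i) / 2 := rfl

lemma DeltaST_le {s t : ℝ} {n : ℕ} {a b : List (Fin 6)} (ha : a.length = n)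
    (hb : b.length = n) (hab : a ≠ b) :
    DeltaST s t n ≤ |compST s t a 0 - compST s t b 0| :=
  csInf_le ⟨0, by rintro _ ⟨_, _, _, _, _, rfl⟩; exact abs_nonneg _⟩ ⟨a, b, ha, hb, hab, rfl⟩

/-- Most significant digit first, since the first letter of a word is applied last. -/
def binaryWord (d : Fin 6) : ℕ → ℕ → List (Fin 6)
  | 0, _ => []
  | n + 1, q => (if 2 ^ n ≤ q then d else 0) :: binaryWord d n (q % 2 ^ n)

lemma length_binaryWord (d : Fin 6) (n q : ℕ) : (binaryWord d n q).length = n := by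
  induction n generalizing q with
  | zero => rfl
  | succ n ih => simp [binaryWord, ih]

lemma compST_binaryWord (s t : ℝ) (d : Fin 6) {n q : ℕ} (hq : q < 2 ^ n) :
    compST s t (binaryWord d n q) 0 = q * ![0, 1, s, 1 + s, t, 1 + t] d / 2 ^ n := by
  induction n generalizing q with
  | zero =>
    obtain rfl : q = 0 := by simpa using hq
    simp [binaryWord, compST]
  | succ n ih =>
    have hmod : (q : ℝ) = (q % 2 ^ n : ℕ) + if 2 ^ n ≤ q then 2 ^ n else 0 := by
      split_ifs with h
      · rw [Nat.mod_eq_sub_mod h, Nat.mod_eq_of_lt (by omega), Nat.cast_sub h]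
        push_cast; ring
      · rw [Nat.mod_eq_of_lt (by omega)]; simp
    rw [binaryWord, compST_cons, ih (Nat.mod_lt _ (by positivity)), hmod]
    split_ifs <;> simp only [Matrix.cons_val_zero, add_zero, pow_succ] <;> field_simp

lemma DeltaST_le_of_irrational {s t : ℝ} {d : Fin 6}
    (hd : Irrational (![0, 1, s, 1 + s, t, 1 + t] d)) {n p q : ℕ} (hp : p < 2 ^ n)
    (hq : q < 2 ^ n) (hpq : ¬(p = 0 ∧ q = 0)) :
    DeltaST s t n ≤ 1 / 2 ^ n * |q * ![0, 1, s, 1 + s, t, 1 + t] d - p| := by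
  have hvq := compST_binaryWord s t d hq
  have hvp : compST s t (binaryWord 1 n p) 0 = p / 2 ^ n := by
    simpa using compST_binaryWord s t 1 hp
  have hne : binaryWord d n q ≠ binaryWord 1 n p := fun h =>
    hd.natCast_mul_ne_natCast hpq <|
      (div_left_inj' (by positivity)).mp (hvq ▸ hvp ▸ congrArg (compST s t · 0) h)
  calc DeltaST s t n ≤ |compST s t (binaryWord d n q) 0 - compST s t (binaryWord 1 n p) 0| :=
        DeltaST_le (length_binaryWord ..) (length_binaryWord ..) hne
    _ = 1 / 2 ^ n * |q * ![0, 1, s, 1 + s, t, 1 + t] d - p| := by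
        rw [hvq, hvp, ← sub_div, abs_div, abs_of_pos (by positivity : (0 : ℝ) < 2 ^ n)]; ring

theorem stmt2_general (s t : ℝ) (hs : Irrational s) (ht : Irrational t) (n : ℕ) :
    (∀ p q : ℤ, 0 ≤ p → p ≤ 2 ^ n - 1 → 0 ≤ q → q ≤ 2 ^ n - 1 → ¬(p = 0 ∧ q = 0) →
      DeltaST s t n ≤ (1 / 2 ^ n) * |(q : ℝ) * s - p|) ∧
    (∀ p q : ℤ, 0 ≤ p → p ≤ 2 ^ n - 1 → 0 ≤ q → q ≤ 2 ^ n - 1 → ¬(p = 0 ∧ q = 0) →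
      DeltaST s t n ≤ (1 / 2 ^ n) * |(q : ℝ) * t - p|) := by
  have key : ∀ d : Fin 6, Irrational (![0, 1, s, 1 + s, t, 1 + t] d) →
      ∀ p q : ℤ, 0 ≤ p → p ≤ 2 ^ n - 1 → 0 ≤ q → q ≤ 2 ^ n - 1 → ¬(p = 0 ∧ q = 0) →
        DeltaST s t n ≤ (1 / 2 ^ n) * |(q : ℝ) * ![0, 1, s, 1 + s, t, 1 + t] d - p| := by
    intro d hd p q hp0 hp hq0 hq hpq
    lift p to ℕ using hp0
    lift q to ℕ using hq0
    have h2n : ((2 ^ n : ℕ) : ℤ) = 2 ^ n := by push_cast; rfl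
    exact_mod_cast DeltaST_le_of_irrational hd (by omega) (by omega) (by exact_mod_cast hpq)
  exact ⟨key 2 hs, key 4 ht⟩

theorem stmt2 (s t : ℝ) (hs : Irrational s) (ht : Irrational t) (n : ℕ) (hn : 1 ≤ n) :
    (∀ p q : ℤ, 0 ≤ p → p ≤ 2 ^ n - 1 → 0 ≤ q → q ≤ 2 ^ n - 1 → ¬(p = 0 ∧ q = 0) →
      DeltaST s t n ≤ (1 / 2 ^ n) * |(q : ℝ) * s - p|) ∧
    (∀ p q : ℤ, 0 ≤ p → p ≤ 2 ^ n - 1 → 0 ≤ q → q ≤ 2 ^ n - 1 → ¬(p = 0 ∧ q = 0) →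
      DeltaST s t n ≤ (1 / 2 ^ n) * |(q : ℝ) * t - p|) :=
  stmt2_general s t hs ht n
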